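/- A 2-edge-coloured graph G = (Γ, R, B) is chromatically invariant if and only if G has no bichromatic 2-path and no induced bichromatic copy of 2K₂. -/

import Mathlib

open SimpleGraph Polynomial

/-- A `k`-colouring of a mixed 2-edge-coloured graph with red edge graph `R`,
blue edge graph `B`, and extra uncoloured edge graph `F`. -/
def IsMixedColouring {V : Type*} (R B F : SimpleGraph V) {k : ℕ} (c : V → Fin k) : Prop :=
  (∀ u v, (R ⊔ B ⊔ F).Adj u v → c u ≠ c v) ∧
  (∀ u x v y, R.Adj u x → B.Adj v y → c u = c v → c x ≠ c y)

/-- The number of `k`-colourings of the mixed 2-edge-coloured graph `(R, B, F)`. -/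
noncomputable def numColourings {V : Type*} (R B F : SimpleGraph V) (k : ℕ) : ℕ :=
  Nat.card {c : V → Fin k // IsMixedColouring R B F c}

/-- A bichromatic 2-path `(x, u, y)`: `xu` red, `uy` blue, `xy` not an edge of `S(M)`. -/
def IsBiPath {V : Type*} (R B F : SimpleGraph V) (x u y : V) : Prop :=
  R.Adj x u ∧ B.Adj u y ∧ ¬(R ⊔ B ⊔ F).Adj x y

/-- The number of bichromatic 2-paths. -/
noncomputable def numBiPaths {V : Type*} (R B F : SimpleGraph V) : ℕ :=
  Nat.card {p : V × V × V // IsBiPath R B F p.1 p.2.1 p.2.2}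

/-- The graph `Λ(M)`: all edges of `S(M)` plus edges joining the ends of
bichromatic 2-paths. -/
def LambdaGraph {V : Type*} (R B F : SimpleGraph V) : SimpleGraph V where
  Adj a b := a ≠ b ∧ ((R ⊔ B ⊔ F).Adj a b ∨
    ∃ w, IsBiPath R B F a w b ∨ IsBiPath R B F b w a)
  symm := by
    constructor
    rintro a b ⟨hab, h⟩
    refine ⟨hab.symm, ?_⟩
    rcases h with h | ⟨w, h⟩
    · exact Or.inl h.symm
    · exact Or.inr ⟨w, h.symm⟩
  loopless := ⟨fun a h => h.1 rfl⟩

/-- `(p.1, p.2)` is a pair of obstructing edges: `p.1` a red edge `ux`, `p.2` a blue edge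
`vy`, with the subgraph of `Λ` induced on `{u, x, v, y}` of chromatic number 2. -/
def IsObstructingPair {V : Type*} (R B F : SimpleGraph V) (p : Sym2 V × Sym2 V) : Prop :=
  ∃ u x v y : V, p.1 = s(u, x) ∧ p.2 = s(v, y) ∧ R.Adj u x ∧ B.Adj v y ∧
    (SimpleGraph.induce {u, x, v, y} (LambdaGraph R B F)).chromaticNumber = 2

/-- The number of pairs of obstructing edges. -/
noncomputable def numObstructing {V : Type*} (R B F : SimpleGraph V) : ℕ :=
  Nat.card {p : Sym2 V × Sym2 V // IsObstructingPair R B F p}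

/-- The number of 3-element vertex subsets inducing a triangle. -/
noncomputable def numTriangles {V : Type*} (G : SimpleGraph V) : ℕ :=
  Nat.card {s : Finset V // s.card = 3 ∧ ∀ a ∈ s, ∀ b ∈ s, a ≠ b → G.Adj a b}

/-- A 2-edge-coloured graph is chromatically invariant when for each `k` its number of
`k`-colourings equals the number of proper `k`-colourings of the underlying graph. -/
def ChromaticallyInvariant {V : Type*} (R B : SimpleGraph V) : Prop :=
  ∀ k : ℕ, Nat.card {c : V → Fin k // IsMixedColouring R B ⊥ c} =
    Nat.card {c : V → Fin k // ∀ u v, (R ⊔ B).Adj u v → c u ≠ c v}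

/-- A graph is a join when its vertex set has a partition into two non-empty parts with
every vertex of one part adjacent to every vertex of the other. -/
def IsJoin {W : Type*} (G : SimpleGraph W) : Prop :=
  ∃ X Y : Set W, X.Nonempty ∧ Y.Nonempty ∧ Disjoint X Y ∧ X ∪ Y = Set.univ ∧
    ∀ x ∈ X, ∀ y ∈ Y, G.Adj x y

/-- Disjoint union of two simple graphs. -/
def disjUnion {α β : Type*} (G : SimpleGraph α) (H : SimpleGraph β) :
    SimpleGraph (α ⊕ β) where
  Adj a b := match a, b with
    | Sum.inl a, Sum.inl b => G.Adj a b
    | Sum.inr a, Sum.inr b => H.Adj a b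
    | _, _ => False
  symm := ⟨by rintro (a | a) (b | b) h <;> simp_all <;> exact h.symm⟩
  loopless := ⟨by rintro (a | a) h <;> exact (SimpleGraph.irrefl _) h⟩

/-- The complete bipartite "cross" graph between the two sides of a sum type. -/
def crossGraph (α β : Type*) : SimpleGraph (α ⊕ β) where
  Adj a b := match a, b with
    | Sum.inl _, Sum.inr _ => True
    | Sum.inr _, Sum.inl _ => True
    | _, _ => False
  symm := ⟨by rintro (a | a) (b | b) h <;> trivial⟩
  loopless := ⟨by rintro (a | a) h <;> exact h⟩
/-- An induced bichromatic copy of `2K₂`: a red edge `ux` and a blue edge `vy` on four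
distinct vertices with no other edges of the underlying graph among them. -/
def HasInducedBichromatic2K2 {V : Type*} (R B : SimpleGraph V) : Prop :=
  ∃ u x v y : V, u ≠ x ∧ u ≠ v ∧ u ≠ y ∧ x ≠ v ∧ x ≠ y ∧ v ≠ y ∧
    R.Adj u x ∧ B.Adj v y ∧
    ¬(R ⊔ B).Adj u v ∧ ¬(R ⊔ B).Adj u y ∧ ¬(R ⊔ B).Adj x v ∧ ¬(R ⊔ B).Adj x y

/-!
Call a 2-edge-coloured graph *red-blue linked* if for every red edge `ux` and blue edge `vy`
the underlying graph has `u ~ v` or `x ~ y`. For such a graph condition (2) follows from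
properness: `c u = c v` forces `u ≁ v`, hence `x ~ y` and `c x ≠ c y`. Conversely, if a red `ux`
and a blue `vy` have `u ≁ v` and `x ≁ y`, merging `v` into `u` and `y` into `x` in a colouring
by distinct colours yields a proper colouring that violates (2). So chromatic invariance is
linkedness, and a failure of linkedness is, after a case analysis on coincidences among
`u, x, v, y`, a bichromatic 2-path or an induced bichromatic `2K₂`.
-/

section

variable {V : Type*} {R B : SimpleGraph V}

variable (R B) in
def RedBlueLinked : Prop :=
  ∀ u x v y : V, R.Adj u x → B.Adj v y → (R ⊔ B).Adj u v ∨ (R ⊔ B).Adj x y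

theorem isMixedColouring_bot_iff {k : ℕ} (c : V → Fin k) :
    IsMixedColouring R B ⊥ c ↔ (∀ u v, (R ⊔ B).Adj u v → c u ≠ c v) ∧
      ∀ u x v y, R.Adj u x → B.Adj v y → c u = c v → c x ≠ c y := by
  rw [IsMixedColouring, sup_bot_eq]

theorem RedBlueLinked.isMixedColouring (h : RedBlueLinked R B) {k : ℕ} {c : V → Fin k}
    (hc : ∀ u v, (R ⊔ B).Adj u v → c u ≠ c v) : IsMixedColouring R B ⊥ c := by
  refine (isMixedColouring_bot_iff c).2 ⟨hc, fun u x v y hux hvy huv hxy => ?_⟩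
  rcases h u x v y hux hvy with h | h
  exacts [hc u v h huv, hc x y h hxy]

theorem exists_proper_not_isMixedColouring [Finite V] (h : ¬ RedBlueLinked R B) :
    ∃ c : V → Fin (Nat.card V),
      (∀ a b, (R ⊔ B).Adj a b → c a ≠ c b) ∧ ¬ IsMixedColouring R B ⊥ c := by
  simp only [RedBlueLinked, not_forall, not_or] at h
  obtain ⟨u, x, v, y, hux, hvy, nuv, nxy⟩ := h
  classical
  let m : V → V := fun w => if w = v then u else if w = y then x else w
  have hm : ∀ a b, (R ⊔ B).Adj a b → m a ≠ m b := by
    intro a b hab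
    simp only [m]
    split_ifs <;> grind [hab.ne, hab.symm, hux.ne, hvy.ne]
  have hmuv : m u = m v := by grind [hvy.ne, hvy.symm]
  have hmxy : m x = m y := by grind [hvy.ne]
  refine ⟨Finite.equivFin V ∘ m, fun a b hab => (Finite.equivFin V).injective.ne (hm a b hab),
    fun hmix => hmix.2 u x v y hux hvy (congrArg (Finite.equivFin V) hmuv)
      (congrArg (Finite.equivFin V) hmxy)⟩

theorem ChromaticallyInvariant.isMixedColouring [Finite V] (h : ChromaticallyInvariant R B)
    {k : ℕ} {c : V → Fin k} (hc : ∀ u v, (R ⊔ B).Adj u v → c u ≠ c v) :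
    IsMixedColouring R B ⊥ c := by
  have hsub : {c : V → Fin k | IsMixedColouring R B ⊥ c} ⊆
      {c | ∀ u v, (R ⊔ B).Adj u v → c u ≠ c v} :=
    fun c hc => ((isMixedColouring_bot_iff c).1 hc).1
  have hcard : {c : V → Fin k | ∀ u v, (R ⊔ B).Adj u v → c u ≠ c v}.ncard ≤
      {c : V → Fin k | IsMixedColouring R B ⊥ c}.ncard := by
    rw [← Nat.card_coe_set_eq, ← Nat.card_coe_set_eq]
    exact (h k).ge
  exact (Set.eq_of_subset_of_ncard_le hsub hcard (Set.toFinite _)).symm.subset hc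

theorem chromaticallyInvariant_iff_redBlueLinked [Finite V] :
    ChromaticallyInvariant R B ↔ RedBlueLinked R B := by
  refine ⟨fun hCI => by_contra fun h => ?_, fun h k => ?_⟩
  · obtain ⟨c, hc, hnot⟩ := exists_proper_not_isMixedColouring h
    exact hnot (hCI.isMixedColouring hc)
  · exact Nat.card_congr <| Equiv.subtypeEquivRight fun c =>
      ⟨fun hc => ((isMixedColouring_bot_iff c).1 hc).1, h.isMixedColouring⟩

theorem RedBlueLinked.not_isBiPath (h : RedBlueLinked R B) (x u y : V) :
    ¬ IsBiPath R B ⊥ x u y := by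
  rintro ⟨hxu, huy, hxy⟩
  rcases h u x u y hxu.symm huy with h | h
  · exact h.ne rfl
  · exact hxy (by rwa [sup_bot_eq])

theorem RedBlueLinked.not_hasInducedBichromatic2K2 (h : RedBlueLinked R B) :
    ¬ HasInducedBichromatic2K2 R B := by
  rintro ⟨u, x, v, y, -, -, -, -, -, -, hux, hvy, nuv, -, -, nxy⟩
  exact (h u x v y hux hvy).elim nuv nxy

theorem adj_of_forall_not_isBiPath (h : ∀ x u y : V, ¬ IsBiPath R B ⊥ x u y) {a w b : V}
    (haw : R.Adj a w) (hwb : B.Adj w b) : (R ⊔ B).Adj a b := by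
  by_contra hab
  exact h a w b ⟨haw, hwb, by rwa [sup_bot_eq]⟩

theorem redBlueLinked_of_forall_not_isBiPath (hP : ∀ x u y : V, ¬ IsBiPath R B ⊥ x u y)
    (h2K2 : ¬ HasInducedBichromatic2K2 R B) : RedBlueLinked R B := by
  intro u x v y hux hvy
  by_contra! ⟨nuv, nxy⟩
  have close {a w b : V} : R.Adj a w → B.Adj w b → (R ⊔ B).Adj a b :=
    adj_of_forall_not_isBiPath hP
  rcases eq_or_ne u v with rfl | huv
  · exact nxy (close hux.symm hvy)
  rcases eq_or_ne x y with rfl | hxy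
  · exact nuv (close hux hvy.symm)
  refine h2K2 ⟨u, x, v, y, hux.ne, huv, ?_, ?_, hxy, hvy.ne, hux, hvy, nuv, ?_, ?_, nxy⟩
  · rintro rfl
    exact nuv (Or.inr hvy.symm)
  · rintro rfl
    exact nuv (Or.inl hux)
  · rintro (h | h)
    exacts [nuv (close h hvy.symm), nxy (close hux.symm h)]
  · rintro (h | h)
    exacts [nxy (close h hvy), nuv (close hux h)]

end

theorem chromaticallyInvariant_iff_no_biPath_and_no_bichromatic2K2_general
    {V : Type*} [Fintype V] (R B : SimpleGraph V) :
    ChromaticallyInvariant R B ↔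
      (∀ x u y : V, ¬ IsBiPath R B ⊥ x u y) ∧ ¬ HasInducedBichromatic2K2 R B := by
  rw [chromaticallyInvariant_iff_redBlueLinked]
  exact ⟨fun h => ⟨h.not_isBiPath, h.not_hasInducedBichromatic2K2⟩,
    fun h => redBlueLinked_of_forall_not_isBiPath h.1 h.2⟩

/-- A 2-edge-coloured graph is chromatically invariant iff it has no bichromatic 2-path
and no induced bichromatic copy of `2K₂`. -/
theorem chromaticallyInvariant_iff_no_biPath_and_no_bichromatic2K2
    {V : Type*} [Fintype V] (R B : SimpleGraph V) (hRB : Disjoint R B) :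
    ChromaticallyInvariant R B ↔
      (∀ x u y : V, ¬ IsBiPath R B ⊥ x u y) ∧ ¬ HasInducedBichromatic2K2 R B :=
  chromaticallyInvariant_iff_no_biPath_and_no_bichromatic2K2_general R B
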